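/- arXiv:1909.01959 — 2 statements merged into one kernel-verified Lean document; each statement's English description precedes it below -/
import Mathlib

section
/- With E(e)=eᵀe and G(e)=e - TγΦΦᵀe, if 0 < λ_π < 2γ̲, γ ∈ [γ̲,γ̄], ΦᵀΦ ≤ N, and 0 ≤ T ≤ (2γ̲-λ_π)/(γ̄²N), then E(G(e)) - E(e) ≤ -λ_π T · eᵀΦΦᵀe for all e ∈ ℝ². -/
open Matrix

theorem stmt2 (γlo γhi N lamπ T γ : ℝ) (Φ e : Fin 2 → ℝ)
    (hγlo : 0 < γlo) (hγhi : 0 < γhi) (hle : γlo ≤ γhi) (hN : 0 < N)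
    (h1 : 0 < lamπ) (h2 : lamπ < 2 * γlo)
    (hT0 : 0 ≤ T) (hT1 : T ≤ (2 * γlo - lamπ) / (γhi ^ 2 * N))
    (hγ1 : γlo ≤ γ) (hγ2 : γ ≤ γhi)
    (hΦ : Φ ⬝ᵥ Φ ≤ N) :
    ((e - (T * γ * (Φ ⬝ᵥ e)) • Φ) ⬝ᵥ (e - (T * γ * (Φ ⬝ᵥ e)) • Φ)) - e ⬝ᵥ e
      ≤ -lamπ * T * (Φ ⬝ᵥ e) ^ 2 := by
  have hTN : T * (γhi ^ 2 * N) ≤ 2 * γlo - lamπ := by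
    have h : 0 < γhi ^ 2 * N := by positivity
    calc T * (γhi ^ 2 * N) ≤ ((2 * γlo - lamπ) / (γhi ^ 2 * N)) * (γhi ^ 2 * N) :=
          mul_le_mul_of_nonneg_right hT1 h.le
      _ = 2 * γlo - lamπ := by field_simp
  have hΦΦ : 0 ≤ Φ ⬝ᵥ Φ := by
    simp [dotProduct, Fin.sum_univ_two]; nlinarith [sq_nonneg (Φ 0), sq_nonneg (Φ 1)]
  -- key: T * γ^2 * (Φ⬝Φ) ≤ 2γ - lamπ
  have hγ0 : 0 < γ := lt_of_lt_of_le hγlo hγ1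
  have hkey : T * (γ ^ 2 * (Φ ⬝ᵥ Φ)) ≤ 2 * γ - lamπ := by
    have h1' : γ ^ 2 * (Φ ⬝ᵥ Φ) ≤ γhi ^ 2 * N := by
      apply mul_le_mul (by nlinarith) hΦ hΦΦ (by positivity)
    calc T * (γ ^ 2 * (Φ ⬝ᵥ Φ)) ≤ T * (γhi ^ 2 * N) := by
          exact mul_le_mul_of_nonneg_left h1' hT0
      _ ≤ 2 * γlo - lamπ := hTN
      _ ≤ 2 * γ - lamπ := by linarith
  simp only [dotProduct, Fin.sum_univ_two, Pi.sub_apply, Pi.smul_apply, smul_eq_mul] at *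
  nlinarith [sq_nonneg (Φ 0 * e 0 + Φ 1 * e 1), mul_nonneg hT0 (sq_nonneg (Φ 0 * e 0 + Φ 1 * e 1)),
    mul_nonneg (mul_nonneg hT0 hγ0.le) (sq_nonneg (Φ 0 * e 0 + Φ 1 * e 1))]
end

section
/- Let A₁ ∈ ℝⁿˣⁿ, B₁ ∈ ℝⁿ, K ∈ ℝ¹ˣⁿ, and P, Q symmetric positive definite with (A₁+B₁K)ᵀP + P(A₁+B₁K) = -Q. Define A(T) = I + A₁T and B(T) = B₁T + B₂T², and V(z)=zᵀPz. Then there exist M > 0 and T₀ > 0 such that for all T ∈ [0,T₀] and all z: V((A(T)+B(T)K)z) - V(z) ≤ -λ_min(Q)·T·‖z‖² + M·T²·‖z‖². -/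
/-!
Write `C = A₁ + B₁K` and `D = B₂K`, so that `A(T) + B(T)K = 1 + T C + T² D`. Conjugating `P` by
this matrix gives `P + T (CᵀP + PC) + T² R(T)` with `R(T)` a quadratic polynomial in `T`, and the
Lyapunov equation turns the linear term into `-T Q`. The Rayleigh bound `zᵀQz ≥ λ_min(Q)‖z‖²`
handles that term, and for `T ∈ [0, 1]` the operator norm of `R(T)` is bounded by the sum of the
norms of its three coefficients, which serves as `M`.
-/

open Matrix
open scoped MatrixOrder Matrix.Norms.L2Operator

namespace Matrix

variable {ι : Type*} [Fintype ι]

theorem mulVec_dotProduct_mulVec {R m : Type*} [CommSemiring R] [Fintype m]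
    (E : Matrix m ι R) (P : Matrix m m R) (z : ι → R) :
    (E *ᵥ z) ⬝ᵥ (P *ᵥ (E *ᵥ z)) = z ⬝ᵥ ((Eᵀ * P * E) *ᵥ z) := by
  rw [← mulVec_mulVec, ← mulVec_mulVec, dotProduct_mulVec z, vecMul_transpose]

theorem transpose_one_add_smul_add_sq_smul_mul_mul {R : Type*} [CommRing R] [DecidableEq ι]
    (P C D : Matrix ι ι R) (T : R) :
    (1 + T • C + T ^ 2 • D)ᵀ * P * (1 + T • C + T ^ 2 • D) =
      P + T • (Cᵀ * P + P * C) + T ^ 2 • (Cᵀ * P * C + Dᵀ * P + P * D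
        + T • (Cᵀ * P * D + Dᵀ * P * C) + T ^ 2 • (Dᵀ * P * D)) := by
  simp only [transpose_add, transpose_one, transpose_smul, add_mul, mul_add, smul_mul_assoc,
    mul_smul_comm, one_mul, mul_one, Matrix.mul_assoc]
  module

theorem IsHermitian.iInf_eigenvalues_mul_dotProduct_self_le [DecidableEq ι] {Q : Matrix ι ι ℝ}
    (hQ : Q.IsHermitian) (z : ι → ℝ) :
    (⨅ i, hQ.eigenvalues i) * (z ⬝ᵥ z) ≤ z ⬝ᵥ (Q *ᵥ z) := by
  have hle : algebraMap ℝ (Matrix ι ι ℝ) (⨅ i, hQ.eigenvalues i) ≤ Q := by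
    refine algebraMap_le_of_le_spectrum (fun x hx => ?_) hQ
    obtain ⟨i, rfl⟩ := hQ.spectrum_real_eq_range_eigenvalues ▸ hx
    exact ciInf_le (Finite.bddBelow_range _) i
  have := (le_iff.mp hle).re_dotProduct_nonneg z
  rwa [Algebra.algebraMap_eq_smul_one, sub_mulVec, smul_mulVec, one_mulVec, star_trivial,
    RCLike.re_to_real, dotProduct_sub, dotProduct_smul, smul_eq_mul, sub_nonneg] at this

theorem dotProduct_mulVec_le_l2_opNorm_mul [DecidableEq ι] (A : Matrix ι ι ℝ) (z : ι → ℝ) :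
    z ⬝ᵥ (A *ᵥ z) ≤ ‖A‖ * (z ⬝ᵥ z) := by
  set x : EuclideanSpace ℝ ι := WithLp.toLp 2 z
  calc z ⬝ᵥ (A *ᵥ z) = inner ℝ (WithLp.toLp 2 (A *ᵥ z) : EuclideanSpace ℝ ι) x := rfl
    _ ≤ ‖A‖ * ‖x‖ * ‖x‖ :=
      (real_inner_le_norm _ _).trans
        (mul_le_mul_of_nonneg_right (A.l2_opNorm_mulVec x) (norm_nonneg _))
    _ = ‖A‖ * (z ⬝ᵥ z) := by
      rw [mul_assoc, ← sq, ← real_inner_self_eq_norm_sq]; rfl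

end Matrix

theorem norm_add_smul_add_sq_smul_le {E : Type*} [SeminormedAddCommGroup E] [NormedSpace ℝ E]
    (x y w : E) {T : ℝ} (hT : T ∈ Set.Icc (0 : ℝ) 1) :
    ‖x + T • y + T ^ 2 • w‖ ≤ ‖x‖ + ‖y‖ + ‖w‖ := by
  obtain ⟨h0, h1⟩ := hT
  calc ‖x + T • y + T ^ 2 • w‖ ≤ ‖x‖ + T * ‖y‖ + T ^ 2 * ‖w‖ := by
        refine norm_add₃_le.trans ?_
        rw [norm_smul, norm_smul, Real.norm_of_nonneg h0, Real.norm_of_nonneg (sq_nonneg T)]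
    _ ≤ ‖x‖ + ‖y‖ + ‖w‖ := by
        gcongr
        · exact mul_le_of_le_one_left (norm_nonneg _) h1
        · exact mul_le_of_le_one_left (norm_nonneg _) (pow_le_one₀ h0 h1)

theorem stmt9_general {n : ℕ}
    (A₁ : Matrix (Fin n) (Fin n) ℝ) (B₁ B₂ : Matrix (Fin n) (Fin 1) ℝ)
    (K : Matrix (Fin 1) (Fin n) ℝ) (P Q : Matrix (Fin n) (Fin n) ℝ)
    (hQ : Q.PosDef)
    (hLyap : (A₁ + B₁ * K)ᵀ * P + P * (A₁ + B₁ * K) = -Q) :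
    ∃ M > (0 : ℝ), ∃ T₀ > (0 : ℝ), ∀ T ∈ Set.Icc (0 : ℝ) T₀, ∀ z : Fin n → ℝ,
      (((1 + T • A₁) + (T • B₁ + T ^ 2 • B₂) * K).mulVec z) ⬝ᵥ
          P.mulVec (((1 + T • A₁) + (T • B₁ + T ^ 2 • B₂) * K).mulVec z)
        - z ⬝ᵥ P.mulVec z
      ≤ -(⨅ i, hQ.1.eigenvalues i) * T * (z ⬝ᵥ z) + M * T ^ 2 * (z ⬝ᵥ z) := by
  set C := A₁ + B₁ * K
  set D := B₂ * K
  set R₀ := Cᵀ * P * C + Dᵀ * P + P * D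
  set R₁ := Cᵀ * P * D + Dᵀ * P * C
  set R₂ := Dᵀ * P * D
  refine ⟨‖R₀‖ + ‖R₁‖ + ‖R₂‖ + 1, by positivity, 1, one_pos, fun T hT z => ?_⟩
  have hE : (1 + T • A₁) + (T • B₁ + T ^ 2 • B₂) * K = 1 + T • C + T ^ 2 • D := by
    simp only [C, D, Matrix.add_mul, Matrix.smul_mul, smul_add]
    abel
  have hQz := hQ.1.iInf_eigenvalues_mul_dotProduct_self_le z
  have hRz := (R₀ + T • R₁ + T ^ 2 • R₂).dotProduct_mulVec_le_l2_opNorm_mul z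
  have hR := norm_add_smul_add_sq_smul_le R₀ R₁ R₂ hT
  have hz : 0 ≤ z ⬝ᵥ z := dotProduct_star_self_nonneg z
  rw [hE, mulVec_dotProduct_mulVec, transpose_one_add_smul_add_sq_smul_mul_mul, hLyap]
  set R := R₀ + T • R₁ + T ^ 2 • R₂ -- keeps `simp` from expanding the remainder
  simp only [add_mulVec, smul_mulVec, neg_mulVec, dotProduct_add, dotProduct_smul,
    dotProduct_neg, smul_eq_mul]
  have hT2 := sq_nonneg T
  linarith [mul_le_mul_of_nonneg_left hQz hT.1, mul_le_mul_of_nonneg_left hRz hT2,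
    mul_le_mul_of_nonneg_left (mul_le_mul_of_nonneg_right hR hz) hT2, mul_nonneg hT2 hz]

theorem stmt9 {n : ℕ}
    (A₁ : Matrix (Fin n) (Fin n) ℝ) (B₁ B₂ : Matrix (Fin n) (Fin 1) ℝ)
    (K : Matrix (Fin 1) (Fin n) ℝ) (P Q : Matrix (Fin n) (Fin n) ℝ)
    (hP : P.PosDef) (hQ : Q.PosDef)
    (hLyap : (A₁ + B₁ * K)ᵀ * P + P * (A₁ + B₁ * K) = -Q) :
    ∃ M > (0 : ℝ), ∃ T₀ > (0 : ℝ), ∀ T ∈ Set.Icc (0 : ℝ) T₀, ∀ z : Fin n → ℝ,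
      (((1 + T • A₁) + (T • B₁ + T ^ 2 • B₂) * K).mulVec z) ⬝ᵥ
          P.mulVec (((1 + T • A₁) + (T • B₁ + T ^ 2 • B₂) * K).mulVec z)
        - z ⬝ᵥ P.mulVec z
      ≤ -(⨅ i, hQ.1.eigenvalues i) * T * (z ⬝ᵥ z) + M * T ^ 2 * (z ⬝ᵥ z) :=
  stmt9_general A₁ B₁ B₂ K P Q hQ hLyap
end
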